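/- arXiv:math/0212279 — 5 statements merged into one kernel-verified Lean document; each statement's English description precedes it below -/
import Mathlib

section
/- Let V be a finite-dimensional complex symplectic vector space and G ⊂ Sp(V) a finite subgroup. For any elements g, h ∈ G such that V = V^g + V^h, one has V^{g·h} = V^g ∩ V^h. -/
/-!
If `g` preserves `ω`, then `ω w (u - g u) = ω (g w) (g u) - ω w (g u) = 0` for every `w ∈ V^g`,
so `Image(1 - g)` is orthogonal to `V^g`. Now let `g h v = v` and put `x = h v - v`. Then
`x = (1 - g) (h v)` and `x = (1 - h) (-v)`, so `x` is orthogonal to `V^g + V^h = V`, hence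
`x = 0` by nondegeneracy. Thus `h v = v`, and then `g v = v`.
-/

namespace LinearMap.BilinForm

variable {R M : Type*} [CommRing R] [AddCommGroup M] [Module R M] (B : LinearMap.BilinForm R M)

theorem orthogonal_sup (N L : Submodule R M) :
    B.orthogonal (N ⊔ L) = B.orthogonal N ⊓ B.orthogonal L := by
  refine le_antisymm (le_inf (orthogonal_le le_sup_left) (orthogonal_le le_sup_right)) ?_
  rintro x ⟨hN, hL⟩ w hw
  obtain ⟨a, ha, b, hb, rfl⟩ := Submodule.mem_sup.mp hw
  rw [map_add, LinearMap.add_apply, hN a ha, hL b hb, add_zero]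

theorem range_one_sub_le_orthogonal_ker_one_sub {g : Module.End R M}
    (hg : ∀ u v, B (g u) (g v) = B u v) :
    LinearMap.range (1 - g) ≤ B.orthogonal (LinearMap.ker (1 - g)) := by
  rintro _ ⟨u, rfl⟩ w hw
  have hgw : g w = w := (sub_eq_zero.mp hw).symm
  rw [LinearMap.sub_apply, Module.End.one_apply, map_sub, ← hg w u, hgw, sub_self]

theorem ker_one_sub_mul_le_inf_of_sup_eq_top (hB : B.Nondegenerate) {g h : Module.End R M}
    (hg : ∀ u v, B (g u) (g v) = B u v) (hh : ∀ u v, B (h u) (h v) = B u v)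
    (hsum : LinearMap.ker (1 - g) ⊔ LinearMap.ker (1 - h) = ⊤) :
    LinearMap.ker (1 - g * h) ≤ LinearMap.ker (1 - g) ⊓ LinearMap.ker (1 - h) := by
  intro v hv
  have hghv : g (h v) = v := (sub_eq_zero.mp hv).symm
  have hx_g : h v - v ∈ LinearMap.range (1 - g) := ⟨h v, by simp [hghv]⟩
  have hx_h : h v - v ∈ LinearMap.range (1 - h) := ⟨-v, by simp [neg_add_eq_sub]⟩
  have hx : h v - v ∈ B.orthogonal ⊤ := by
    rw [← hsum, orthogonal_sup]
    exact ⟨B.range_one_sub_le_orthogonal_ker_one_sub hg hx_g,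
      B.range_one_sub_le_orthogonal_ker_one_sub hh hx_h⟩
  rw [orthogonal_top_eq_bot hB, Submodule.mem_bot, sub_eq_zero] at hx
  rw [hx] at hghv
  exact ⟨sub_eq_zero.mpr hghv.symm, sub_eq_zero.mpr hx.symm⟩

end LinearMap.BilinForm

theorem LinearMap.inf_ker_one_sub_le_ker_one_sub_mul {R M : Type*} [Ring R] [AddCommGroup M]
    [Module R M] (g h : Module.End R M) :
    LinearMap.ker (1 - g) ⊓ LinearMap.ker (1 - h) ≤ LinearMap.ker (1 - g * h) := by
  rintro v ⟨hgv, hhv⟩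
  have hgv : g v = v := (sub_eq_zero.mp hgv).symm
  have hhv : h v = v := (sub_eq_zero.mp hhv).symm
  simp [hgv, hhv]

theorem fixed_space_of_mul_eq_inf_general
    (V : Type*) [AddCommGroup V] [Module ℂ V]
    (ω : LinearMap.BilinForm ℂ V) (hNondeg : ω.Nondegenerate)
    (G : Subgroup (V ≃ₗ[ℂ] V))
    (hGsymp : ∀ g ∈ G, ∀ u v : V, ω (g u) (g v) = ω u v)
    (g h : V ≃ₗ[ℂ] V) (hg : g ∈ G) (hh : h ∈ G)
    (hsum : LinearMap.ker ((1 : V →ₗ[ℂ] V) - g.toLinearMap) ⊔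
        LinearMap.ker ((1 : V →ₗ[ℂ] V) - h.toLinearMap) = ⊤) :
    LinearMap.ker ((1 : V →ₗ[ℂ] V) - (g * h).toLinearMap) =
      LinearMap.ker ((1 : V →ₗ[ℂ] V) - g.toLinearMap) ⊓
        LinearMap.ker ((1 : V →ₗ[ℂ] V) - h.toLinearMap) := by
  have hmul : (g * h).toLinearMap = g.toLinearMap * h.toLinearMap := rfl
  rw [hmul]
  exact le_antisymm
    (ω.ker_one_sub_mul_le_inf_of_sup_eq_top hNondeg (hGsymp g hg) (hGsymp h hh) hsum)
    (LinearMap.inf_ker_one_sub_le_ker_one_sub_mul _ _)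

/-- Lemma "easy" of Ginzburg–Kaledin.
Let `V` be a finite-dimensional complex symplectic vector space and `G ⊂ Sp(V)` a finite
subgroup.  For any `g, h ∈ G` with `V = V^g + V^h`, one has `V^{g·h} = V^g ∩ V^h`,
where `V^g = ker (id - g)` is the fixed subspace. -/
theorem fixed_space_of_mul_eq_inf
    (V : Type*) [AddCommGroup V] [Module ℂ V] [FiniteDimensional ℂ V]
    (ω : LinearMap.BilinForm ℂ V) (hAlt : ω.IsAlt) (hNondeg : ω.Nondegenerate)
    (G : Subgroup (V ≃ₗ[ℂ] V)) (hGfin : Finite G)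
    (hGsymp : ∀ g ∈ G, ∀ u v : V, ω (g u) (g v) = ω u v)
    (g h : V ≃ₗ[ℂ] V) (hg : g ∈ G) (hh : h ∈ G)
    (hsum : LinearMap.ker ((1 : V →ₗ[ℂ] V) - g.toLinearMap) ⊔
        LinearMap.ker ((1 : V →ₗ[ℂ] V) - h.toLinearMap) = ⊤) :
    LinearMap.ker ((1 : V →ₗ[ℂ] V) - (g * h).toLinearMap) =
      LinearMap.ker ((1 : V →ₗ[ℂ] V) - g.toLinearMap) ⊓
        LinearMap.ker ((1 : V →ₗ[ℂ] V) - h.toLinearMap) :=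
  fixed_space_of_mul_eq_inf_general V ω hNondeg G hGsymp g h hg hh hsum
end

section
/- For any element g ∈ Sp(V) of finite order acting on a finite-dimensional complex symplectic vector space V, the rank rk(id_V − g) is an even integer. -/
/-!
Put `W = range (1 - g)`. Since `ω (w, u - g u) = ω (w - g⁻¹ w, u)`, a vector of `W` that is
`ω`-orthogonal to `W` is fixed by `g`; and a fixed vector `w = u - g u` gives `gᵏ u = u - k • w`,
so `gⁿ = 1` forces `w = 0`. Hence `ω` restricts to a nondegenerate alternating form on `W`. Its
Gram matrix `M` is skew, so `det M = det (-Mᵀ) = (-1) ^ dim W * det M` with `det M ≠ 0`, and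
`dim W` is even.
-/

open Module LinearMap
open scoped Matrix

theorem Module.End.disjoint_range_ker_one_sub_of_isOfFinOrder {R M : Type*} [Ring R]
    [AddCommGroup M] [Module R M] [IsAddTorsionFree M] {f : Module.End R M}
    (hf : IsOfFinOrder f) : Disjoint (range (1 - f)) (ker (1 - f)) := by
  rw [Submodule.disjoint_def]
  rintro _ ⟨u, rfl⟩ hfix
  set w := (1 - f) u
  have hw : f w = w := (sub_eq_zero.mp hfix).symm
  have hpow : ∀ k : ℕ, (f ^ k) u = u - k • w := by
    intro k
    induction k with
    | zero => simp
    | succ k ih =>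
      rw [pow_succ', Module.End.mul_apply, ih, map_sub, map_nsmul, hw, succ_nsmul]
      simp only [w, LinearMap.sub_apply, Module.End.one_apply]
      abel
  obtain ⟨n, hn, hfn⟩ := hf.exists_pow_eq_one
  have hnw : u - n • w = u := by rw [← hpow n, hfn, Module.End.one_apply]
  exact (nsmul_eq_zero_iff_right hn.ne').mp (sub_eq_self.mp hnw)

namespace LinearMap.BilinForm

theorem nondegenerate_restrict_range_one_sub {R M : Type*} [CommRing R] [AddCommGroup M]
    [Module R M] {B : LinearMap.BilinForm R M} (hRefl : B.IsRefl) (hB : B.SeparatingLeft)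
    (g : M ≃ₗ[R] M) (hg : ∀ u v, B (g u) (g v) = B u v)
    (hdisj : Disjoint (range (1 - g.toLinearMap)) (ker (1 - g.toLinearMap))) :
    (B.restrict (range (1 - g.toLinearMap))).Nondegenerate := by
  have hReflW : (B.restrict (range (1 - g.toLinearMap))).IsRefl := fun x y => hRefl x y
  refine hReflW.nondegenerate_iff_separatingLeft.mpr fun w hw => ?_
  have hsymm : g.symm w = w := by
    refine (sub_eq_zero.mp (hB _ fun u => ?_)).symm
    have horth := hw ⟨(1 - g.toLinearMap) u, mem_range_self _ u⟩
    have hgu := hg (g.symm w) u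
    simp only [LinearEquiv.apply_symm_apply] at hgu
    simpa [restrict_apply, hgu] using horth
  have hfix : (w : M) ∈ ker (1 - g.toLinearMap) := by
    simp [sub_eq_zero, ← g.symm_apply_eq, hsymm]
  exact Subtype.ext (Submodule.disjoint_def.mp hdisj w w.2 hfix)

theorem even_finrank_of_isAlt {K V : Type*} [Field K] [AddCommGroup V] [Module K V]
    [FiniteDimensional K V] (hK : ringChar K ≠ 2) {B : LinearMap.BilinForm K V} (hAlt : B.IsAlt)
    (hB : B.Nondegenerate) : Even (finrank K V) := by
  let b := Module.finBasis K V
  set M := BilinForm.toMatrix b B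
  have hskew : Mᵀ = -M := by
    ext i j
    simp [M, BilinForm.toMatrix_apply, ← hAlt.neg_eq (b j) (b i)]
  have hdet : M.det ≠ 0 := (nondegenerate_iff_det_ne_zero b).mp hB
  have hsign : M.det = (-1) ^ finrank K V * M.det := by
    conv_lhs => rw [← Matrix.det_transpose, hskew, Matrix.det_neg, Fintype.card_fin]
  rw [← neg_one_pow_eq_one_iff_even (Ring.neg_one_ne_one_of_char_ne_two hK)]
  exact (mul_eq_right₀ hdet).mp hsign.symm

end LinearMap.BilinForm

/-- For a symplectic automorphism `g ∈ Sp(V)` of finite order on a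
finite-dimensional complex symplectic vector space, the rank `rk (id − g) = dim Image (id − g)`
is an even integer. -/
theorem even_rank_id_sub_of_symplectic_finOrder
    (V : Type*) [AddCommGroup V] [Module ℂ V] [FiniteDimensional ℂ V]
    (ω : LinearMap.BilinForm ℂ V) (hAlt : ω.IsAlt) (hNondeg : ω.Nondegenerate)
    (g : V ≃ₗ[ℂ] V) (hg : ∀ u v : V, ω (g u) (g v) = ω u v)
    (hfin : IsOfFinOrder g) :
    Even (Module.finrank ℂ (LinearMap.range ((1 : V →ₗ[ℂ] V) - g.toLinearMap))) := by
  have : IsAddTorsionFree V := .of_isTorsionFree ℂ V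
  have hdisj : Disjoint (range (1 - g.toLinearMap)) (ker (1 - g.toLinearMap)) :=
    Module.End.disjoint_range_ker_one_sub_of_isOfFinOrder
      (LinearEquiv.automorphismGroup.toLinearMapMonoidHom.isOfFinOrder hfin)
  have hNondegW := BilinForm.nondegenerate_restrict_range_one_sub hAlt.isRefl hNondeg.1 g hg hdisj
  exact BilinForm.even_finrank_of_isAlt (by simp [ringChar.eq_zero]) (fun x => hAlt x) hNondegW
end

section
/- Let Δ be a root system in a finite-dimensional real inner product space E, with Weyl group W, and let H be a finite group of linear automorphisms of E which preserve Δ and which map a fixed Weyl chamber C⁺_ℝ ⊂ E to itself. Let C = ℂ ⊗_ℝ E be the complexification, with the ℂ-linear extensions of the actions of W and H. Then every H-fixed point of the orbit space C/W lifts to an H-fixed vector: for every v ∈ C whose W-orbit is H-stable (i.e., for each h ∈ H there exists w ∈ W with h·v = w·v), there exists w₀ ∈ W such that w₀·v is fixed by every element of H. Equivalently, the natural map C^H → (C/W)_H from H-fixed vectors to H-fixed W-orbits is surjective (and, since W-orbits are finite, has finite fibers). -/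
/-!
Write `v = a ⊗ 1 + b ⊗ i`. For a generic real `t`, the map `ψ v = a + t b` commutes with all
complexified real maps and is injective on the finite `W`-orbit of `v`; choose `w₀ ∈ W` with
`ψ (w₀ v)` in the closed chamber. An `h ∈ H` permutes `Δ`, so it conjugates `s_α` to `s_{hα}`;
hence it normalises `W` and rescales each `⟪α, ·⟫` positively, `⟪hα, hx⟫ = c ⟪α, x⟫` with `c > 0`.
Since `h` preserves the open chamber, it preserves the closed one, so `ψ (h w₀ v)` lies in the
closed chamber and in the `W`-orbit of `ψ (w₀ v)`. The closed chamber meets each `W`-orbit once,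
so `ψ (h w₀ v) = ψ (w₀ v)`, and injectivity of `ψ` on the orbit gives `h w₀ v = w₀ v`.
-/

open scoped TensorProduct RealInnerProductSpace

noncomputable section

open Module Set
open scoped Pointwise

variable {E : Type*} [NormedAddCommGroup E] [InnerProductSpace ℝ E] {Δ : Set E}

def coroot (α : E) : Dual ℝ E := (2 / ⟪α, α⟫) • innerₗ E α

lemma coroot_apply (α x : E) : coroot α x = 2 * ⟪α, x⟫ / ⟪α, α⟫ := by
  simp [coroot, mul_comm, mul_div_assoc]

lemma coroot_self {α : E} (hα : α ≠ 0) : coroot α α = 2 := by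
  rw [coroot_apply, mul_div_assoc, div_self (inner_self_ne_zero.2 hα), mul_one]

-- For `α = 0` the junk value `2 / ⟪0, 0⟫ = 0` makes `coroot α = 0` and the reflection trivial.
lemma involutive_preReflection_coroot (α : E) :
    Function.Involutive (preReflection α (coroot α)) := by
  rcases eq_or_ne α 0 with rfl | hα
  · intro x; simp [preReflection_apply]
  · exact involutive_preReflection (coroot_self hα)

def rootReflection (α : E) : E ≃ₗ[ℝ] E :=
  LinearEquiv.ofInvolutive _ (involutive_preReflection_coroot α)

lemma coe_rootReflection (α : E) : ⇑(rootReflection α) = preReflection α (coroot α) := rfl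

lemma rootReflection_apply (α x : E) :
    rootReflection α x = x - (2 * ⟪α, x⟫ / ⟪α, α⟫) • α := by
  rw [coe_rootReflection, preReflection_apply, coroot_apply]

@[simp]
lemma rootReflection_mul_self (α : E) : rootReflection α * rootReflection α = 1 :=
  LinearEquiv.ext (involutive_preReflection_coroot α)

@[simp]
lemma rootReflection_inv (α : E) : (rootReflection α)⁻¹ = rootReflection α :=
  inv_eq_of_mul_eq_one_left (rootReflection_mul_self α)

lemma rootReflection_self {α : E} (hα : α ≠ 0) : rootReflection α α = -α := by
  rw [coe_rootReflection, preReflection_apply_self (coroot_self hα)]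

lemma rootReflection_apply_of_inner_eq_zero {α x : E} (h : ⟪α, x⟫ = 0) :
    rootReflection α x = x := by
  simp [rootReflection_apply, h]

lemma inner_rootReflection_rootReflection (α x y : E) :
    ⟪rootReflection α x, rootReflection α y⟫ = ⟪x, y⟫ := by
  rcases eq_or_ne α 0 with rfl | hα
  · simp [rootReflection_apply]
  have : ⟪α, α⟫ ≠ 0 := inner_self_ne_zero.2 hα
  simp only [rootReflection_apply, inner_sub_left, inner_sub_right, real_inner_smul_left,
    real_inner_smul_right, real_inner_comm α]
  field_simp
  ring

lemma rootReflection_smul {α : E} {k : ℝ} (hk : k ≠ 0) :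
    rootReflection (k • α) = rootReflection α := by
  ext x
  rcases eq_or_ne α 0 with rfl | hα
  · simp
  have : ⟪α, α⟫ ≠ 0 := inner_self_ne_zero.2 hα
  simp only [rootReflection_apply, real_inner_smul_left, real_inner_smul_right, smul_smul]
  congr 2
  field_simp

@[simp]
lemma rootReflection_neg (α : E) : rootReflection (-α) = rootReflection α := by
  simpa using rootReflection_smul (α := α) (k := -1) (by norm_num)

structure IsRootSystem (Δ : Set E) : Prop where
  finite : Δ.Finite
  span_eq_top : Submodule.span ℝ Δ = ⊤
  zero_notMem : (0 : E) ∉ Δ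
  mapsTo_rootReflection : ∀ α ∈ Δ, MapsTo (rootReflection α) Δ Δ

def weylGroup (Δ : Set E) : Subgroup (E ≃ₗ[ℝ] E) :=
  Subgroup.closure {w | ∃ α ∈ Δ, w = rootReflection α}

lemma rootReflection_mem_weylGroup {α : E} (hα : α ∈ Δ) :
    rootReflection α ∈ weylGroup Δ :=
  Subgroup.subset_closure ⟨α, hα, rfl⟩

lemma list_prod_mem_weylGroup {L : List E} (hL : ∀ γ ∈ L, γ ∈ Δ) :
    (L.map rootReflection).prod ∈ weylGroup Δ :=
  Subgroup.list_prod_mem _ <| by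
    simpa using fun γ hγ => rootReflection_mem_weylGroup (hL γ hγ)

lemma inner_apply_apply_of_mem_weylGroup {w : E ≃ₗ[ℝ] E} (hw : w ∈ weylGroup Δ)
    (x y : E) : ⟪w x, w y⟫ = ⟪x, y⟫ := by
  induction hw using Subgroup.closure_induction generalizing x y with
  | mem w hw => obtain ⟨α, -, rfl⟩ := hw; exact inner_rootReflection_rootReflection α x y
  | one => rfl
  | mul a b _ _ ha hb => simp only [LinearEquiv.mul_apply, ha, hb]
  | inv a _ ha => rw [← ha, ← LinearEquiv.mul_apply, ← LinearEquiv.mul_apply]; simp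

lemma mem_stabilizer_iff_image_eq {g : E ≃ₗ[ℝ] E} :
    g ∈ MulAction.stabilizer (E ≃ₗ[ℝ] E) Δ ↔ g '' Δ = Δ := by
  rw [MulAction.mem_stabilizer_iff, ← Set.image_smul]
  rfl

lemma mapsTo_of_mem_stabilizer {g : E ≃ₗ[ℝ] E}
    (hg : g ∈ MulAction.stabilizer (E ≃ₗ[ℝ] E) Δ) : MapsTo g Δ Δ :=
  fun _ hx => mem_stabilizer_iff_image_eq.1 hg ▸ mem_image_of_mem g hx

namespace IsRootSystem

lemma ne_zero (hΔ : IsRootSystem Δ) {α : E} (hα : α ∈ Δ) : α ≠ 0 :=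
  ne_of_mem_of_not_mem hα hΔ.zero_notMem

lemma neg_mem (hΔ : IsRootSystem Δ) {α : E} (hα : α ∈ Δ) : -α ∈ Δ := by
  simpa [rootReflection_self (hΔ.ne_zero hα)] using hΔ.mapsTo_rootReflection α hα hα

lemma rootReflection_mem_stabilizer (hΔ : IsRootSystem Δ) {α : E} (hα : α ∈ Δ) :
    rootReflection α ∈ MulAction.stabilizer (E ≃ₗ[ℝ] E) Δ := by
  rw [mem_stabilizer_iff_image_eq]
  refine (hΔ.mapsTo_rootReflection α hα).image_subset.antisymm fun β hβ => ?_
  exact ⟨rootReflection α β, hΔ.mapsTo_rootReflection α hα hβ,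
    by rw [← LinearEquiv.mul_apply, rootReflection_mul_self]; rfl⟩

lemma weylGroup_le_stabilizer (hΔ : IsRootSystem Δ) :
    weylGroup Δ ≤ MulAction.stabilizer (E ≃ₗ[ℝ] E) Δ :=
  (Subgroup.closure_le _).2 <| by
    rintro _ ⟨α, hα, rfl⟩; exact hΔ.rootReflection_mem_stabilizer hα

lemma finite_weylGroup (hΔ : IsRootSystem Δ) : Finite (weylGroup Δ) := by
  have : Finite Δ := hΔ.finite.to_subtype
  refine Finite.of_injective (fun (w : weylGroup Δ) (α : Δ) =>
    (⟨(w : E ≃ₗ[ℝ] E) α, mapsTo_of_mem_stabilizer (hΔ.weylGroup_le_stabilizer w.2) α.2⟩ : Δ))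
    fun w w' h => ?_
  refine Subtype.ext (LinearEquiv.toLinearMap_injective (LinearMap.ext_on hΔ.span_eq_top ?_))
  intro α hα
  simpa using congr_arg Subtype.val (congr_fun h ⟨α, hα⟩)

lemma coroot_comp_inv (hΔ : IsRootSystem Δ) {g : E ≃ₗ[ℝ] E}
    (hg : g ∈ MulAction.stabilizer (E ≃ₗ[ℝ] E) Δ) {α : E} (hα : α ∈ Δ) :
    coroot α ∘ₗ (g⁻¹ : E ≃ₗ[ℝ] E).toLinearMap = coroot (g α) := by
  have hgα := mapsTo_of_mem_stabilizer hg hα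
  refine Dual.eq_of_preReflection_mapsTo hΔ.finite hΔ.span_eq_top ?_ ?_
    (coroot_self (hΔ.ne_zero hgα)) (hΔ.mapsTo_rootReflection _ hgα)
  · simpa [← LinearEquiv.mul_apply] using coroot_self (hΔ.ne_zero hα)
  · have : ⇑(preReflection (g α) (coroot α ∘ₗ (g⁻¹ : E ≃ₗ[ℝ] E).toLinearMap)) =
        g ∘ rootReflection α ∘ (g⁻¹ : E ≃ₗ[ℝ] E) := by
      ext y; simp [preReflection_apply, coe_rootReflection]
    rw [this]
    exact (mapsTo_of_mem_stabilizer hg).comp ((hΔ.mapsTo_rootReflection α hα).comp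
      (mapsTo_of_mem_stabilizer (inv_mem hg)))

lemma inner_apply_apply (hΔ : IsRootSystem Δ) {g : E ≃ₗ[ℝ] E}
    (hg : g ∈ MulAction.stabilizer (E ≃ₗ[ℝ] E) Δ) {α : E} (hα : α ∈ Δ) (x : E) :
    ⟪g α, g x⟫ = ⟪g α, g α⟫ / ⟪α, α⟫ * ⟪α, x⟫ := by
  have h := LinearMap.congr_fun (hΔ.coroot_comp_inv hg hα) (g x)
  have hα0 : ⟪α, α⟫ ≠ 0 := inner_self_ne_zero.2 (hΔ.ne_zero hα)
  have hgα0 : ⟪g α, g α⟫ ≠ 0 :=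
    inner_self_ne_zero.2 (hΔ.ne_zero (mapsTo_of_mem_stabilizer hg hα))
  simp only [LinearMap.comp_apply, LinearEquiv.coe_coe, ← LinearEquiv.mul_apply, inv_mul_cancel,
    LinearEquiv.coe_one, id_eq, coroot_apply] at h
  field_simp at h ⊢
  linarith

lemma conj_rootReflection (hΔ : IsRootSystem Δ) {g : E ≃ₗ[ℝ] E}
    (hg : g ∈ MulAction.stabilizer (E ≃ₗ[ℝ] E) Δ) {α : E} (hα : α ∈ Δ) :
    g * rootReflection α * g⁻¹ = rootReflection (g α) := by
  ext y
  simp [coe_rootReflection, preReflection_apply, ← hΔ.coroot_comp_inv hg hα]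

lemma conj_mem_weylGroup (hΔ : IsRootSystem Δ) {g : E ≃ₗ[ℝ] E}
    (hg : g ∈ MulAction.stabilizer (E ≃ₗ[ℝ] E) Δ) {w : E ≃ₗ[ℝ] E} (hw : w ∈ weylGroup Δ) :
    g * w * g⁻¹ ∈ weylGroup Δ := by
  induction hw using Subgroup.closure_induction with
  | mem w hw =>
    obtain ⟨α, hα, rfl⟩ := hw
    rw [hΔ.conj_rootReflection hg hα]
    exact rootReflection_mem_weylGroup (mapsTo_of_mem_stabilizer hg hα)
  | one => simp
  | mul a b _ _ ha hb => simpa [mul_assoc] using mul_mem ha hb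
  | inv a _ ha => simpa [mul_assoc] using inv_mem ha

end IsRootSystem

def IsRegularVector (Δ : Set E) (ρ : E) : Prop := ∀ α ∈ Δ, ⟪α, ρ⟫ ≠ 0

def positiveRoots (Δ : Set E) (ρ : E) : Set E := {α ∈ Δ | 0 < ⟪α, ρ⟫}

def IsDominant (Δ : Set E) (ρ x : E) : Prop := ∀ β ∈ positiveRoots Δ ρ, 0 ≤ ⟪β, x⟫

namespace IsRootSystem

lemma mem_or_neg_mem_positiveRoots (hΔ : IsRootSystem Δ) {ρ : E} (hρ : IsRegularVector Δ ρ)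
    {α : E} (hα : α ∈ Δ) : α ∈ positiveRoots Δ ρ ∨ -α ∈ positiveRoots Δ ρ := by
  rcases (hρ α hα).lt_or_gt with h | h
  · exact .inr ⟨hΔ.neg_mem hα, by simpa [inner_neg_left] using h⟩
  · exact .inl ⟨hα, h⟩

lemma exists_isDominant (hΔ : IsRootSystem Δ) (ρ x : E) :
    ∃ w ∈ weylGroup Δ, IsDominant Δ ρ (w x) := by
  have := hΔ.finite_weylGroup
  obtain ⟨⟨w, hw⟩, hmax⟩ := Finite.exists_max fun w : weylGroup Δ => ⟪ρ, (w : E ≃ₗ[ℝ] E) x⟫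
  refine ⟨w, hw, fun β ⟨hβ, hβρ⟩ => not_lt.1 fun hneg => ?_⟩
  have hββ : 0 < ⟪β, β⟫ := real_inner_self_pos.2 (hΔ.ne_zero hβ)
  have hgain : 2 * ⟪β, w x⟫ / ⟪β, β⟫ * ⟪ρ, β⟫ < 0 :=
    mul_neg_of_neg_of_pos (div_neg_of_neg_of_pos (by linarith) hββ) (real_inner_comm ρ β ▸ hβρ)
  refine (hmax ⟨_, mul_mem (rootReflection_mem_weylGroup hβ) hw⟩).not_gt ?_
  simp only [LinearEquiv.mul_apply, rootReflection_apply, inner_sub_right, real_inner_smul_right]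
  linarith

lemma isDominant_apply (hΔ : IsRootSystem Δ) {g : E ≃ₗ[ℝ] E}
    (hg : g ∈ MulAction.stabilizer (E ≃ₗ[ℝ] E) Δ) {ρ x : E} (hx : IsDominant Δ ρ x) :
    IsDominant Δ (g ρ) (g x) := by
  rintro _ ⟨hβ, hβρ⟩
  obtain ⟨β, hβΔ, rfl⟩ := (mem_stabilizer_iff_image_eq.1 hg).symm ▸ hβ
  have hc : 0 < ⟪g β, g β⟫ / ⟪β, β⟫ :=
    div_pos (real_inner_self_pos.2 (hΔ.ne_zero hβ)) (real_inner_self_pos.2 (hΔ.ne_zero hβΔ))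
  rw [hΔ.inner_apply_apply hg hβΔ] at hβρ ⊢
  exact mul_nonneg hc.le (hx β ⟨hβΔ, pos_of_mul_pos_right hβρ hc.le⟩)

end IsRootSystem

lemma positiveRoots_eq_of_mem_connectedComponentIn {x₀ z : E}
    (hz : z ∈ connectedComponentIn {x : E | ∀ α ∈ Δ, ⟪α, x⟫ ≠ 0} x₀) :
    positiveRoots Δ z = positiveRoots Δ x₀ := by
  set C := connectedComponentIn {x : E | ∀ α ∈ Δ, ⟪α, x⟫ ≠ 0} x₀
  have hx₀ : x₀ ∈ C := connectedComponentIn_nonempty_iff.1 ⟨z, hz⟩ |> mem_connectedComponentIn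
  have hsign : ∀ α ∈ Δ, ∀ a ∈ C, ∀ b ∈ C, 0 < ⟪α, a⟫ → 0 < ⟪α, b⟫ := by
    intro α hα a ha b hb hpos
    by_contra! hneg
    obtain ⟨y, hy, hy0⟩ := isPreconnected_connectedComponentIn.intermediate_value hb ha
      (continuous_const.inner continuous_id).continuousOn ⟨hneg, hpos.le⟩
    exact connectedComponentIn_subset _ _ hy α hα hy0
  ext α
  exact and_congr_right fun hα => ⟨hsign α hα z hz x₀ hx₀, hsign α hα x₀ hx₀ z hz⟩

section NonnegSpan

variable {V : Type*} [AddCommGroup V] [Module ℝ V]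

def nonnegSpan (S : Finset V) : Set V :=
  {x | ∃ f : V → ℝ, (∀ a, 0 ≤ f a) ∧ ∑ a ∈ S, f a • a = x}

lemma mem_nonnegSpan_of_mem [DecidableEq V] {S : Finset V} {a : V} (ha : a ∈ S) :
    a ∈ nonnegSpan S :=
  ⟨fun b => if b = a then 1 else 0, fun b => by dsimp only; split_ifs <;> norm_num,
    by simp [ite_smul, ha]⟩

lemma smul_mem_nonnegSpan {S : Finset V} {c : ℝ} (hc : 0 ≤ c) {x : V} (hx : x ∈ nonnegSpan S) :
    c • x ∈ nonnegSpan S := by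
  obtain ⟨f, hf, rfl⟩ := hx
  exact ⟨c • f, fun a => mul_nonneg hc (hf a), by simp [Finset.smul_sum, smul_smul]⟩

lemma nonnegSpan_subset_of_mem_nonnegSpan_erase [DecidableEq V] {S : Finset V} {a : V}
    (ha : a ∈ S) (h : a ∈ nonnegSpan (S.erase a)) : nonnegSpan S ⊆ nonnegSpan (S.erase a) := by
  obtain ⟨g, hg, hga⟩ := h
  rintro _ ⟨f, hf, rfl⟩
  refine ⟨fun b => f b + f a * g b, fun b => add_nonneg (hf b) (mul_nonneg (hf a) (hg b)), ?_⟩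
  simp only [add_smul, mul_smul, Finset.sum_add_distrib, ← Finset.smul_sum, hga]
  rw [← Finset.add_sum_erase S _ ha, add_comm]

end NonnegSpan

lemma exists_inner_pos_of_mem_nonnegSpan {S : Finset E} {β : E} (hβ : β ∈ nonnegSpan S)
    (hβ0 : β ≠ 0) : ∃ γ ∈ S, 0 < ⟪γ, β⟫ := by
  obtain ⟨f, hf, hβf⟩ := hβ
  have hpos : 0 < ⟪β, β⟫ := real_inner_self_pos.2 hβ0
  nth_rw 1 [← hβf] at hpos
  simp only [sum_inner, real_inner_smul_left] at hpos
  obtain ⟨γ, hγ, hγpos⟩ :=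
    Finset.exists_lt_of_sum_lt (f := fun _ => (0 : ℝ)) (by simpa using hpos)
  exact ⟨γ, hγ, pos_of_mul_pos_right hγpos (hf γ)⟩

-- `Δ` need not be crystallographic, so simple roots are cut out by a minimality condition on
-- nonnegative real spans; their linear independence is never needed.
structure IsSimpleSystem [DecidableEq E] (Δ : Set E) (ρ : E) (S : Finset E) : Prop where
  subset_positiveRoots : ↑S ⊆ positiveRoots Δ ρ
  positiveRoots_subset : positiveRoots Δ ρ ⊆ nonnegSpan S
  notMem_nonnegSpan_erase : ∀ γ ∈ S, γ ∉ nonnegSpan (S.erase γ)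

lemma exists_isSimpleSystem [DecidableEq E] (hΔ : Δ.Finite) (ρ : E) :
    ∃ S, IsSimpleSystem Δ ρ S := by
  classical
  have hP : (positiveRoots Δ ρ).Finite := hΔ.subset (sep_subset Δ _)
  obtain ⟨S, hSmin⟩ := Finset.exists_minimal
    (s := hP.toFinset.powerset.filter fun T => positiveRoots Δ ρ ⊆ nonnegSpan T)
    ⟨hP.toFinset, Finset.mem_filter.2 ⟨Finset.mem_powerset_self _,
      fun β hβ => mem_nonnegSpan_of_mem (hP.mem_toFinset.2 hβ)⟩⟩
  obtain ⟨hSP, hPS⟩ := Finset.mem_filter.1 hSmin.prop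
  refine ⟨S, fun γ hγ => hP.mem_toFinset.1 (Finset.mem_powerset.1 hSP hγ), hPS, fun γ hγ h => ?_⟩
  have hle := hSmin.2 (y := S.erase γ) (Finset.mem_filter.2 ⟨Finset.mem_powerset.2
    ((Finset.erase_subset γ S).trans (Finset.mem_powerset.1 hSP)),
      hPS.trans (nonnegSpan_subset_of_mem_nonnegSpan_erase hγ h)⟩) (Finset.erase_subset γ S)
  exact Finset.notMem_erase γ S (hle hγ)

namespace IsSimpleSystem

variable [DecidableEq E] {ρ : E} {S : Finset E}

lemma inner_pos (hS : IsSimpleSystem Δ ρ S) {γ : E} (hγ : γ ∈ S) : 0 < ⟪γ, ρ⟫ :=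
  (hS.subset_positiveRoots hγ).2

lemma coeff_eq_zero_of_sum_eq (hS : IsSimpleSystem Δ ρ S) {γ : E} (hγ : γ ∈ S) {k : E → ℝ}
    (hk : ∀ x, 0 ≤ k x) (h : ∑ x ∈ S, k x • x = γ) {x : E} (hx : x ∈ S) (hxγ : x ≠ γ) :
    k x = 0 := by
  have hγk : γ - k γ • γ = ∑ x ∈ S.erase γ, k x • x := by
    rw [sub_eq_iff_eq_add', Finset.add_sum_erase S (fun x => k x • x) hγ, h]
  -- `k γ < 1` would put `γ` in the nonnegative span of the other simple roots.
  have hkγ : 1 ≤ k γ := by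
    by_contra! hlt
    refine hS.notMem_nonnegSpan_erase γ hγ
      ⟨fun x => (1 - k γ)⁻¹ * k x, fun x => mul_nonneg (by simp [hlt.le]) (hk x), ?_⟩
    simp only [mul_smul, ← Finset.smul_sum, ← hγk]
    rw [show γ - k γ • γ = (1 - k γ) • γ by rw [sub_smul, one_smul],
      inv_smul_smul₀ (sub_ne_zero.2 hlt.ne')]
  have hterm : ∀ y ∈ S.erase γ, 0 ≤ k y * ⟪y, ρ⟫ := fun y hy =>
    mul_nonneg (hk y) (hS.inner_pos (Finset.mem_of_mem_erase hy)).le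
  have hsum : ∑ y ∈ S.erase γ, k y * ⟪y, ρ⟫ = (1 - k γ) * ⟪γ, ρ⟫ := by
    simpa [sum_inner, real_inner_smul_left, inner_sub_left, sub_mul] using
      (congr_arg (⟪·, ρ⟫) hγk).symm
  have hzero := (Finset.sum_eq_zero_iff_of_nonneg hterm).1 <| le_antisymm
    (hsum ▸ mul_nonpos_of_nonpos_of_nonneg (by linarith) (hS.inner_pos hγ).le)
    (Finset.sum_nonneg hterm)
  exact (mul_eq_zero.1 (hzero x (Finset.mem_erase.2 ⟨hxγ, hx⟩))).resolve_right
    (hS.inner_pos hx).ne'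

lemma eq_smul_of_add_eq (hS : IsSimpleSystem Δ ρ S) {γ u v : E} (hγ : γ ∈ S)
    (hu : u ∈ nonnegSpan S) (hv : v ∈ nonnegSpan S) (h : u + v = γ) : ∃ c : ℝ, u = c • γ := by
  obtain ⟨f, hf, rfl⟩ := hu
  obtain ⟨g, hg, rfl⟩ := hv
  refine ⟨f γ, Finset.sum_eq_single_of_mem γ hγ fun x hx hxγ => ?_⟩
  have hfg : f x + g x = 0 := hS.coeff_eq_zero_of_sum_eq hγ (k := f + g)
    (fun y => add_nonneg (hf y) (hg y)) (by simpa [add_smul, Finset.sum_add_distrib] using h) hx hxγ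
  simp [((add_eq_zero_iff_of_nonneg (hf x) (hg x)).1 hfg).1]

lemma rootReflection_mem_positiveRoots (hS : IsSimpleSystem Δ ρ S) (hΔ : IsRootSystem Δ)
    (hρ : IsRegularVector Δ ρ) {γ β : E} (hγ : γ ∈ S) (hβ : β ∈ positiveRoots Δ ρ)
    (hβγ : ∀ c : ℝ, β ≠ c • γ) : rootReflection γ β ∈ positiveRoots Δ ρ := by
  refine (hΔ.mem_or_neg_mem_positiveRoots hρ
    (hΔ.mapsTo_rootReflection γ (hS.subset_positiveRoots hγ).1 hβ.1)).resolve_right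
    fun hneg => ?_
  set t := 2 * ⟪γ, β⟫ / ⟪γ, γ⟫
  have hsum : t • γ = β + -rootReflection γ β := by rw [rootReflection_apply]; abel
  have ht : 0 < t := by
    have := congr_arg (⟪·, ρ⟫) hsum
    simp only [real_inner_smul_left, inner_add_left] at this
    exact pos_of_mul_pos_left (this ▸ add_pos hβ.2 hneg.2) (hS.inner_pos hγ).le
  obtain ⟨c, hc⟩ := hS.eq_smul_of_add_eq hγ
    (smul_mem_nonnegSpan (inv_nonneg.2 ht.le) (hS.positiveRoots_subset hβ))
    (smul_mem_nonnegSpan (inv_nonneg.2 ht.le) (hS.positiveRoots_subset hneg))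
    (by rw [← smul_add, ← hsum, inv_smul_smul₀ ht.ne'])
  exact hβγ (t * c) (by rw [mul_smul, ← hc, smul_inv_smul₀ ht.ne'])

lemma rootReflection_mem_closure (hS : IsSimpleSystem Δ ρ S) (hΔ : IsRootSystem Δ)
    (hρ : IsRegularVector Δ ρ) {β : E} (hβ : β ∈ Δ) :
    rootReflection β ∈ Subgroup.closure {w | ∃ γ ∈ S, w = rootReflection γ} := by
  set K := Subgroup.closure {w | ∃ γ ∈ S, w = rootReflection γ}
  suffices h : ∀ β ∈ positiveRoots Δ ρ, rootReflection β ∈ K by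
    rcases hΔ.mem_or_neg_mem_positiveRoots hρ hβ with hβ | hβ
    · exact h β hβ
    · simpa using h _ hβ
  by_contra! hbad
  obtain ⟨β, ⟨hβ, hβK⟩, hmin⟩ :=
    Set.exists_min_image {β ∈ positiveRoots Δ ρ | rootReflection β ∉ K} (⟪·, ρ⟫)
      (hΔ.finite.subset fun β hβ => hβ.1.1) hbad
  obtain ⟨γ, hγ, hγβ⟩ :=
    exists_inner_pos_of_mem_nonnegSpan (hS.positiveRoots_subset hβ) (hΔ.ne_zero hβ.1)
  have hγK : rootReflection γ ∈ K := Subgroup.subset_closure ⟨γ, hγ, rfl⟩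
  by_cases hβγ : ∃ c : ℝ, β = c • γ
  · obtain ⟨c, rfl⟩ := hβγ
    have hc : c ≠ 0 := by rintro rfl; exact hΔ.zero_notMem (by simpa using hβ.1)
    exact hβK (by rwa [rootReflection_smul hc])
  push Not at hβγ
  have hγΔ := (hS.subset_positiveRoots hγ).1
  set β' := rootReflection γ β
  have hβ' : β' ∈ positiveRoots Δ ρ := hS.rootReflection_mem_positiveRoots hΔ hρ hγ hβ hβγ
  have hlt : ⟪β', ρ⟫ < ⟪β, ρ⟫ := by
    have : 0 < 2 * ⟪γ, β⟫ / ⟪γ, γ⟫ * ⟪γ, ρ⟫ :=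
      mul_pos (div_pos (by linarith) (real_inner_self_pos.2 (hΔ.ne_zero hγΔ))) (hS.inner_pos hγ)
    simp only [β', rootReflection_apply, inner_sub_left, real_inner_smul_left]
    linarith
  have hβ'K : rootReflection β' ∈ K := by
    by_contra h
    exact (hmin β' ⟨hβ', h⟩).not_gt hlt
  have hconj := hΔ.conj_rootReflection (hΔ.rootReflection_mem_stabilizer hγΔ) hβ'.1
  rw [← LinearEquiv.mul_apply, rootReflection_mul_self, LinearEquiv.coe_one, id] at hconj
  exact hβK (hconj ▸ mul_mem (mul_mem hγK hβ'K) (inv_mem hγK))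

lemma exists_word (hS : IsSimpleSystem Δ ρ S) (hΔ : IsRootSystem Δ) (hρ : IsRegularVector Δ ρ)
    {w : E ≃ₗ[ℝ] E} (hw : w ∈ weylGroup Δ) :
    ∃ L : List E, (∀ γ ∈ L, γ ∈ S) ∧ (L.map rootReflection).prod = w := by
  replace hw := (Subgroup.closure_le _).2
    (by rintro _ ⟨α, hα, rfl⟩; exact hS.rootReflection_mem_closure hΔ hρ hα) hw
  induction hw using Subgroup.closure_induction with
  | mem w hw => obtain ⟨γ, hγ, rfl⟩ := hw; exact ⟨[γ], by simpa using hγ, by simp⟩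
  | one => exact ⟨[], by simp, by simp⟩
  | mul a b _ _ ha hb =>
    obtain ⟨L, hL, rfl⟩ := ha
    obtain ⟨L', hL', rfl⟩ := hb
    exact ⟨L ++ L', fun γ hγ => (List.mem_append.1 hγ).elim (hL γ) (hL' γ), by simp⟩
  | inv a _ ha =>
    obtain ⟨L, hL, rfl⟩ := ha
    exact ⟨L.reverse, fun γ hγ => hL γ (List.mem_reverse.1 hγ),
      by simp [List.prod_inv_reverse, List.map_reverse, Function.comp_def]⟩

lemma exists_shorter_word (hS : IsSimpleSystem Δ ρ S) (hΔ : IsRootSystem Δ)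
    (hρ : IsRegularVector Δ ρ) {γ : E} (hγ : γ ∈ S) {L : List E} (hL : ∀ δ ∈ L, δ ∈ S)
    (hneg : ⟪(L.map rootReflection).prod γ, ρ⟫ < 0) :
    ∃ L' : List E, (∀ δ ∈ L', δ ∈ S) ∧ L'.length < L.length ∧
      (L'.map rootReflection).prod = (L.map rootReflection).prod * rootReflection γ := by
  induction L with
  | nil => exact absurd hneg (hS.inner_pos hγ).not_gt
  | cons δ L ih =>
    simp only [List.mem_cons, forall_eq_or_imp] at hL
    simp only [List.map_cons, List.prod_cons, LinearEquiv.mul_apply] at hneg ⊢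
    set u := (L.map rootReflection).prod
    have hu : u ∈ weylGroup Δ :=
      list_prod_mem_weylGroup fun δ hδ => (hS.subset_positiveRoots (hL.2 δ hδ)).1
    have huγ : u γ ∈ Δ :=
      mapsTo_of_mem_stabilizer (hΔ.weylGroup_le_stabilizer hu) (hS.subset_positiveRoots hγ).1
    rcases (hρ _ huγ).lt_or_gt with h | h
    · obtain ⟨L', hL', hlen, hprod⟩ := ih hL.2 h
      exact ⟨δ :: L', by simpa [hL.1] using hL', by simpa using hlen,
        by simp [hprod, mul_assoc]⟩
    -- `u γ` is positive but `s_δ (u γ)` is not, so `u γ` is a multiple of `δ`.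
    obtain ⟨c, hc⟩ : ∃ c : ℝ, u γ = c • δ := by
      by_contra! hne
      exact hneg.not_gt (hS.rootReflection_mem_positiveRoots hΔ hρ hL.1 ⟨huγ, h⟩ hne).2
    have hconj := hΔ.conj_rootReflection (hΔ.weylGroup_le_stabilizer hu)
      (hS.subset_positiveRoots hγ).1
    rw [hc, rootReflection_smul (by rintro rfl; exact hΔ.ne_zero huγ (hc.trans (zero_smul _ _)))]
      at hconj
    refine ⟨L, hL.2, by simp, ?_⟩
    calc u = rootReflection δ * rootReflection δ * u := by simp
      _ = rootReflection δ * (u * rootReflection γ * u⁻¹) * u := by rw [hconj]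
      _ = rootReflection δ * u * rootReflection γ := by group

lemma list_prod_apply_eq_self (hS : IsSimpleSystem Δ ρ S) (hΔ : IsRootSystem Δ)
    (hρ : IsRegularVector Δ ρ) {L : List E} (hL : ∀ γ ∈ L, γ ∈ S) {x : E}
    (hx : IsDominant Δ ρ x) (hwx : IsDominant Δ ρ ((L.map rootReflection).prod x)) :
    (L.map rootReflection).prod x = x := by
  induction hn : L.length using Nat.strong_induction_on generalizing L with
  | _ n ih =>
  rcases L.eq_nil_or_concat' with rfl | ⟨L, γ, rfl⟩
  · simp
  simp only [List.mem_append, List.mem_singleton] at hL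
  have hγ : γ ∈ S := hL γ (.inr rfl)
  have hLS : ∀ δ ∈ L, δ ∈ S := fun δ hδ => hL δ (.inl hδ)
  have hγΔ := (hS.subset_positiveRoots hγ).1
  set u := (L.map rootReflection).prod
  have hprod : ((L ++ [γ]).map rootReflection).prod = u * rootReflection γ := by simp [u]
  rw [hprod] at hwx ⊢
  have hw : u * rootReflection γ ∈ weylGroup Δ := hprod ▸ list_prod_mem_weylGroup fun δ hδ =>
    (hS.subset_positiveRoots (hL δ (by simpa using hδ))).1
  have hwγ : (u * rootReflection γ) γ ∈ Δ :=
    mapsTo_of_mem_stabilizer (hΔ.weylGroup_le_stabilizer hw) hγΔ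
  rcases (hρ _ hwγ).lt_or_gt with h | h
  · -- `x` lies on the wall of `γ`, so `s_γ` fixes it and the word gets shorter.
    have h₁ : 0 ≤ ⟪γ, x⟫ := hx γ (hS.subset_positiveRoots hγ)
    have h₂ := hwx _ ⟨hΔ.neg_mem hwγ, by simpa [inner_neg_left] using h⟩
    rw [inner_neg_left, inner_apply_apply_of_mem_weylGroup hw] at h₂
    have hfix : rootReflection γ x = x := rootReflection_apply_of_inner_eq_zero (by linarith)
    rw [LinearEquiv.mul_apply, hfix] at hwx ⊢
    exact ih L.length (by simp [← hn]) hLS hwx rfl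
  · have huγ : ⟪u γ, ρ⟫ < 0 := by
      simpa [rootReflection_self (hΔ.ne_zero hγΔ), inner_neg_left] using h
    obtain ⟨L', hL', hlen, hprod'⟩ := hS.exists_shorter_word hΔ hρ hγ hLS huγ
    rw [← hprod'] at hwx ⊢
    exact ih L'.length (by simp [← hn]; omega) hL' hwx rfl

end IsSimpleSystem

lemma IsRootSystem.apply_eq_self_of_isDominant (hΔ : IsRootSystem Δ) {ρ : E}
    (hρ : IsRegularVector Δ ρ) {w : E ≃ₗ[ℝ] E} (hw : w ∈ weylGroup Δ) {x : E}
    (hx : IsDominant Δ ρ x) (hwx : IsDominant Δ ρ (w x)) : w x = x := by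
  classical
  obtain ⟨S, hS⟩ := exists_isSimpleSystem hΔ.finite ρ
  obtain ⟨L, hL, rfl⟩ := hS.exists_word hΔ hρ hw
  exact hS.list_prod_apply_eq_self hΔ hρ hL hx hwx

lemma exists_injOn_add_smul {K V W : Type*} [Field K] [Infinite K] [AddCommGroup V] [Module K V]
    [AddCommGroup W] [Module K W] (p q : V →ₗ[K] W) (hpq : ∀ v, p v = 0 → q v = 0 → v = 0)
    {O : Set V} (hO : O.Finite) : ∃ t : K, InjOn (p + t • q) O := by
  set B := ⋃ u ∈ O, ⋃ u' ∈ O, {t : K | u ≠ u' ∧ (p + t • q) u = (p + t • q) u'}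
  have hB : B.Finite := hO.biUnion fun u _ => hO.biUnion fun u' _ => Set.Subsingleton.finite <| by
    have key : ∀ t : K, (p + t • q) u = (p + t • q) u' → p (u - u') + t • q (u - u') = 0 :=
      fun t h => by
        simp only [LinearMap.add_apply, LinearMap.smul_apply] at h
        rw [map_sub, map_sub, ← sub_eq_zero.2 h]
        module
    rintro t₁ ⟨hne, h₁⟩ t₂ ⟨-, h₂⟩
    by_contra h₁₂
    have hq : q (u - u') = 0 := by
      by_contra hq
      exact h₁₂ (smul_left_injective K hq (add_left_cancel ((key t₁ h₁).trans (key t₂ h₂).symm)))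
    refine hne (sub_eq_zero.1 (hpq _ ?_ hq))
    simpa [hq] using key t₁ h₁
  obtain ⟨t, -, ht⟩ := Set.infinite_univ.exists_notMem_finite hB
  exact ⟨t, fun u hu u' hu' h =>
    by_contra fun hne => ht (mem_biUnion hu (mem_biUnion hu' ⟨hne, h⟩))⟩

section Complexification

variable {R A M N : Type*} [CommRing R] [Ring A] [Algebra R A] [AddCommGroup M] [Module R M]
  [AddCommGroup N] [Module R N]

lemma lid_rTensor_baseChange (ℓ : A →ₗ[R] R) (f : M →ₗ[R] N) (v : A ⊗[R] M) :
    TensorProduct.lid R N (ℓ.rTensor N (f.baseChange A v)) =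
      f (TensorProduct.lid R M (ℓ.rTensor M v)) := by
  induction v with
  | zero => simp
  | tmul a x => simp
  | add v w hv hw => simp only [map_add, hv, hw]

end Complexification

lemma tmul_re_add_tmul_im {M : Type*} [AddCommGroup M] [Module ℝ M] (v : ℂ ⊗[ℝ] M) :
    (1 : ℂ) ⊗ₜ TensorProduct.lid ℝ M (Complex.reLm.rTensor M v) +
      Complex.I ⊗ₜ TensorProduct.lid ℝ M (Complex.imLm.rTensor M v) = v := by
  induction v with
  | zero => simp
  | tmul z x =>
    simp only [LinearMap.rTensor_tmul, TensorProduct.lid_tmul, TensorProduct.tmul_smul,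
      TensorProduct.smul_tmul', ← TensorProduct.add_tmul, Complex.reLm_coe, Complex.imLm_coe,
      Complex.real_smul, mul_one]
    rw [Complex.re_add_im]
  | add v w hv hw =>
    simp only [map_add, TensorProduct.tmul_add]
    conv_rhs => rw [← hv, ← hw]
    abel

section BaseChange

variable {R A M : Type*} [CommRing R] [Ring A] [Algebra R A] [AddCommGroup M] [Module R M]

@[simp]
lemma baseChange_inv_apply_baseChange (g : M ≃ₗ[R] M) (v : A ⊗[R] M) :
    ((g⁻¹ : M ≃ₗ[R] M) : M →ₗ[R] M).baseChange A ((g : M →ₗ[R] M).baseChange A v) = v := by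
  rw [← Module.End.mul_apply, ← LinearMap.baseChange_mul, ← LinearEquiv.coe_toLinearMap_mul,
    inv_mul_cancel]
  simp

end BaseChange

namespace IsRootSystem

lemma baseChange_apply_eq_self (hΔ : IsRootSystem Δ) {ρ : E} (hρ : IsRegularVector Δ ρ)
    {g : E ≃ₗ[ℝ] E} (hg : g ∈ MulAction.stabilizer (E ≃ₗ[ℝ] E) Δ)
    (hgρ : positiveRoots Δ (g ρ) = positiveRoots Δ ρ) {ψ : ℂ ⊗[ℝ] E →ₗ[ℝ] E}
    (hψ : ∀ (f : E →ₗ[ℝ] E) v, ψ (f.baseChange ℂ v) = f (ψ v)) {u : ℂ ⊗[ℝ] E}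
    (hinj : InjOn ψ {u' | ∃ w ∈ weylGroup Δ, (w : E →ₗ[ℝ] E).baseChange ℂ u = u'})
    (hu : IsDominant Δ ρ (ψ u)) {w : E ≃ₗ[ℝ] E} (hw : w ∈ weylGroup Δ)
    (hgu : (g : E →ₗ[ℝ] E).baseChange ℂ u = (w : E →ₗ[ℝ] E).baseChange ℂ u) :
    (g : E →ₗ[ℝ] E).baseChange ℂ u = u := by
  have hgw : g (ψ u) = w (ψ u) := by
    simpa only [hψ, LinearEquiv.coe_coe] using congr_arg ψ hgu
  have hdom : IsDominant Δ ρ (w (ψ u)) := by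
    have := hΔ.isDominant_apply hg hu
    rwa [IsDominant, hgρ, hgw] at this
  rw [hgu]
  refine hinj ⟨w, hw, rfl⟩ ⟨1, one_mem _, by simp⟩ ?_
  rw [hψ, LinearEquiv.coe_coe, hΔ.apply_eq_self_of_isDominant hρ hw hu hdom]

lemma exists_baseChange_fixed (hΔ : IsRootSystem Δ) {ρ : E} (hρ : IsRegularVector Δ ρ)
    {H : Set (E ≃ₗ[ℝ] E)} (hHΔ : H ⊆ MulAction.stabilizer (E ≃ₗ[ℝ] E) Δ)
    (hHρ : ∀ h ∈ H, positiveRoots Δ (h ρ) = positiveRoots Δ ρ) {v : ℂ ⊗[ℝ] E}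
    (hv : ∀ h ∈ H, ∃ w ∈ weylGroup Δ,
      (h : E →ₗ[ℝ] E).baseChange ℂ v = (w : E →ₗ[ℝ] E).baseChange ℂ v) :
    ∃ w₀ ∈ weylGroup Δ, ∀ h ∈ H, (h : E →ₗ[ℝ] E).baseChange ℂ
      ((w₀ : E →ₗ[ℝ] E).baseChange ℂ v) = (w₀ : E →ₗ[ℝ] E).baseChange ℂ v := by
  have := hΔ.finite_weylGroup
  set p := (TensorProduct.lid ℝ E).toLinearMap ∘ₗ Complex.reLm.rTensor E
  set q := (TensorProduct.lid ℝ E).toLinearMap ∘ₗ Complex.imLm.rTensor E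
  obtain ⟨t, ht⟩ := exists_injOn_add_smul p q
    (fun v hp hq => by
      simp only [p, q, LinearMap.comp_apply, LinearEquiv.coe_coe] at hp hq
      rw [← tmul_re_add_tmul_im v, hp, hq]
      simp)
    (finite_range fun w : weylGroup Δ => (w : E →ₗ[ℝ] E).baseChange ℂ v)
  set ψ := p + t • q
  have hψ : ∀ (f : E →ₗ[ℝ] E) v, ψ (f.baseChange ℂ v) = f (ψ v) := by
    simp [ψ, p, q, lid_rTensor_baseChange]
  obtain ⟨w₀, hw₀, hdom⟩ := hΔ.exists_isDominant ρ (ψ v)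
  refine ⟨w₀, hw₀, fun h hh => ?_⟩
  obtain ⟨w, hw, hhv⟩ := hv h hh
  refine hΔ.baseChange_apply_eq_self hρ (hHΔ hh) (hHρ h hh) hψ ?_ (by rwa [hψ])
    (w := h * w₀ * h⁻¹ * w * w₀⁻¹)
    (mul_mem (mul_mem (hΔ.conj_mem_weylGroup (hHΔ hh) hw₀) hw) (inv_mem hw₀)) ?_
  · refine ht.mono ?_
    rintro _ ⟨w, hw, rfl⟩
    exact ⟨⟨w * w₀, mul_mem hw hw₀⟩, by simp [LinearMap.baseChange_mul]⟩
  · simp [LinearMap.baseChange_mul, ← hhv]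

end IsRootSystem

end

theorem weyl_chamber_H_fixed_lift_general
    (E : Type*) [NormedAddCommGroup E] [InnerProductSpace ℝ E]
    (Δ : Set E) (hfin : Δ.Finite) (hspan : Submodule.span ℝ Δ = ⊤) (hzero : (0 : E) ∉ Δ)
    (refl : E → E ≃ₗ[ℝ] E)
    (hrefl : ∀ α ∈ Δ, ∀ x : E, refl α x = x - (2 * ⟪α, x⟫ / ⟪α, α⟫) • α)
    (hreflΔ : ∀ α ∈ Δ, ∀ β ∈ Δ, refl α β ∈ Δ)
    (W : Subgroup (E ≃ₗ[ℝ] E))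
    (hW : W = Subgroup.closure {w : E ≃ₗ[ℝ] E | ∃ α ∈ Δ, w = refl α})
    (Cplus : Set E) (x₀ : E) (hx₀ : ∀ α ∈ Δ, ⟪α, x₀⟫ ≠ 0)
    (hC : Cplus = connectedComponentIn {x : E | ∀ α ∈ Δ, ⟪α, x⟫ ≠ 0} x₀)
    (H : Subgroup (E ≃ₗ[ℝ] E))
    (hHΔ : ∀ h ∈ H, (h : E ≃ₗ[ℝ] E) '' Δ = Δ)
    (hHC : ∀ h ∈ H, (h : E ≃ₗ[ℝ] E) '' Cplus = Cplus) :
    (∀ v : ℂ ⊗[ℝ] E,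
        (∀ h ∈ H, ∃ w ∈ W,
          LinearMap.baseChange ℂ (h : E ≃ₗ[ℝ] E).toLinearMap v =
            LinearMap.baseChange ℂ (w : E ≃ₗ[ℝ] E).toLinearMap v) →
        ∃ w₀ ∈ W, ∀ h ∈ H,
          LinearMap.baseChange ℂ (h : E ≃ₗ[ℝ] E).toLinearMap
              (LinearMap.baseChange ℂ (w₀ : E ≃ₗ[ℝ] E).toLinearMap v) =
            LinearMap.baseChange ℂ (w₀ : E ≃ₗ[ℝ] E).toLinearMap v) ∧
      ∀ u : ℂ ⊗[ℝ] E,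
        {u' : ℂ ⊗[ℝ] E |
          (∀ h ∈ H, LinearMap.baseChange ℂ (h : E ≃ₗ[ℝ] E).toLinearMap u' = u') ∧
          ∃ w ∈ W, LinearMap.baseChange ℂ (w : E ≃ₗ[ℝ] E).toLinearMap u = u'}.Finite := by
  have hs : ∀ α ∈ Δ, refl α = rootReflection α := fun α hα =>
    LinearEquiv.ext fun x => (hrefl α hα x).trans (rootReflection_apply α x).symm
  have hΔ : IsRootSystem Δ := ⟨hfin, hspan, hzero, fun α hα β hβ => hs α hα ▸ hreflΔ α hα β hβ⟩
  obtain rfl : W = weylGroup Δ := by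
    rw [hW, weylGroup]
    congr 1
    ext w
    constructor <;> rintro ⟨α, hα, rfl⟩ <;> exact ⟨α, hα, by rw [hs α hα]⟩
  have hx₀C : x₀ ∈ Cplus := hC ▸ mem_connectedComponentIn hx₀
  have hHρ (h) (hh : h ∈ H) : positiveRoots Δ (h x₀) = positiveRoots Δ x₀ :=
    positiveRoots_eq_of_mem_connectedComponentIn (hC ▸ hHC h hh ▸ Set.mem_image_of_mem h hx₀C)
  refine ⟨fun v hv => hΔ.exists_baseChange_fixed hx₀
    (fun h hh => mem_stabilizer_iff_image_eq.2 (hHΔ h hh)) hHρ hv, fun u => ?_⟩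
  have := hΔ.finite_weylGroup
  exact (Set.finite_range fun w : weylGroup Δ => (w : E →ₗ[ℝ] E).baseChange ℂ u).subset
    (by rintro _ ⟨-, w, hw, rfl⟩; exact ⟨⟨w, hw⟩, rfl⟩)

/-- Let `Δ` be a root system in a finite-dimensional real inner product
space `E` with Weyl group `W`, and `H` a finite group of linear automorphisms of `E`
preserving `Δ` and a fixed Weyl chamber `C⁺`.  Then, in the complexification `C = ℂ ⊗ E`,
every `H`-fixed point of `C/W` lifts to an `H`-fixed vector: if the `W`-orbit of `v ∈ C` is
`H`-stable, then some `W`-translate `w₀·v` is fixed by all of `H`.  Moreover the fibers of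
`C^H → (C/W)_H` are finite: for each `u ∈ C` only finitely many `H`-fixed vectors lie in the
`W`-orbit of `u`. -/
theorem weyl_chamber_H_fixed_lift
    (E : Type*) [NormedAddCommGroup E] [InnerProductSpace ℝ E] [FiniteDimensional ℝ E]
    (Δ : Set E) (hfin : Δ.Finite) (hspan : Submodule.span ℝ Δ = ⊤) (hzero : (0 : E) ∉ Δ)
    (refl : E → E ≃ₗ[ℝ] E)
    (hrefl : ∀ α ∈ Δ, ∀ x : E, refl α x = x - (2 * ⟪α, x⟫ / ⟪α, α⟫) • α)
    (hreflΔ : ∀ α ∈ Δ, ∀ β ∈ Δ, refl α β ∈ Δ)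
    (W : Subgroup (E ≃ₗ[ℝ] E))
    (hW : W = Subgroup.closure {w : E ≃ₗ[ℝ] E | ∃ α ∈ Δ, w = refl α})
    (Cplus : Set E) (x₀ : E) (hx₀ : ∀ α ∈ Δ, ⟪α, x₀⟫ ≠ 0)
    (hC : Cplus = connectedComponentIn {x : E | ∀ α ∈ Δ, ⟪α, x⟫ ≠ 0} x₀)
    (H : Subgroup (E ≃ₗ[ℝ] E)) (hHfin : Finite H)
    (hHΔ : ∀ h ∈ H, (h : E ≃ₗ[ℝ] E) '' Δ = Δ)
    (hHC : ∀ h ∈ H, (h : E ≃ₗ[ℝ] E) '' Cplus = Cplus) :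
    (∀ v : ℂ ⊗[ℝ] E,
        (∀ h ∈ H, ∃ w ∈ W,
          LinearMap.baseChange ℂ (h : E ≃ₗ[ℝ] E).toLinearMap v =
            LinearMap.baseChange ℂ (w : E ≃ₗ[ℝ] E).toLinearMap v) →
        ∃ w₀ ∈ W, ∀ h ∈ H,
          LinearMap.baseChange ℂ (h : E ≃ₗ[ℝ] E).toLinearMap
              (LinearMap.baseChange ℂ (w₀ : E ≃ₗ[ℝ] E).toLinearMap v) =
            LinearMap.baseChange ℂ (w₀ : E ≃ₗ[ℝ] E).toLinearMap v) ∧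
      ∀ u : ℂ ⊗[ℝ] E,
        {u' : ℂ ⊗[ℝ] E |
          (∀ h ∈ H, LinearMap.baseChange ℂ (h : E ≃ₗ[ℝ] E).toLinearMap u' = u') ∧
          ∃ w ∈ W, LinearMap.baseChange ℂ (w : E ≃ₗ[ℝ] E).toLinearMap u = u'}.Finite :=
  weyl_chamber_H_fixed_lift_general E Δ hfin hspan hzero refl hrefl hreflΔ W hW Cplus x₀ hx₀ hC H
    hHΔ hHC
end

section
/- Let A and B be unital associative ℂ-algebras and define, for each m ≥ 0, the map κ_A : C^m(A) → C^m(A ⊗ B) on pure tensors by κ_A(f)(a₁ ⊗ b₁, …, a_m ⊗ b_m) = f(a₁, …, a_m) ⊗ (b₁ b₂ ⋯ b_m). Then κ_A is compatible with insertions, κ_A(f) ∘_i κ_A(g) = κ_A(f ∘_i g) for all admissible i, hence κ_A(f ∘ g) = κ_A(f) ∘ κ_A(g) and κ_A is a morphism of graded Lie algebras for the Gerstenhaber bracket: κ_A([f, g]) = [κ_A(f), κ_A(g)] for all f ∈ C^k(A), g ∈ C^l(A). The analogous statement holds for κ_B : C^m(B) → C^m(A ⊗ B) defined by κ_B(f)(a₁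 ⊗ b₁, …, a_m ⊗ b_m) = (a₁ ⋯ a_m) ⊗ f(b₁, …, b_m). -/
open scoped TensorProduct

/-- The insertion `f ∘_i g` of an `l`-cochain `g` into the `i`-th slot of a
`(k+1)`-cochain `f` (cochains regarded as functions of tuples):
`(f ∘_i g)(a₁,…,a_{k+l}) = f(a₁,…,a_{i−1}, g(a_i,…,a_{i+l−1}), a_{i+l},…)`. -/
def insertCochain {M : Type*} {k l : ℕ}
    (f : (Fin (k + 1) → M) → M) (g : (Fin l → M) → M) (i : Fin (k + 1)) :
    (Fin (k + l) → M) → M := fun v =>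
  f fun j =>
    if hji : (j : ℕ) < (i : ℕ) then
      v ⟨(j : ℕ), by have := j.isLt; have := i.isLt; omega⟩
    else if hje : (j : ℕ) = (i : ℕ) then
      g fun s => v ⟨(i : ℕ) + (s : ℕ), by have := i.isLt; have := s.isLt; omega⟩
    else
      v ⟨(j : ℕ) + l - 1, by have := j.isLt; omega⟩

/-- The circle product `f ∘ g = Σ_{i=1}^{k+1} (−1)^{(i−1)(l−1)} f ∘_i g`. -/
noncomputable def circleCochain {M : Type*} [AddCommGroup M] [Module ℂ M] {k l : ℕ}
    (f : (Fin (k + 1) → M) → M) (g : (Fin l → M) → M) :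
    (Fin (k + l) → M) → M := fun v =>
  ∑ i : Fin (k + 1),
    ((-1 : ℂ) ^ (((i : ℕ) : ℤ) * ((l : ℤ) - 1))) • insertCochain f g i v

/-- The Gerstenhaber bracket `[f, g] = f ∘ g − (−1)^{(k−1)(l−1)} g ∘ f` of a
`(k+1)`-cochain and an `(l+1)`-cochain. -/
noncomputable def bracketCochain {M : Type*} [AddCommGroup M] [Module ℂ M] {k l : ℕ}
    (f : (Fin (k + 1) → M) → M) (g : (Fin (l + 1) → M) → M) :
    (Fin (k + l + 1) → M) → M := fun v =>
  circleCochain f g v -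
    ((-1 : ℂ) ^ (k * l)) •
      circleCochain g f (fun j => v (Fin.cast (by omega : l + (k + 1) = k + l + 1) j))

/-- `F` agrees on pure tensors with `κ_A(f)`, i.e.
`F(a₁ ⊗ b₁, …, a_m ⊗ b_m) = f(a₁, …, a_m) ⊗ (b₁ b₂ ⋯ b_m)`. -/
def IsKappaA {A B : Type*} [Ring A] [Algebra ℂ A] [Ring B] [Algebra ℂ B] {m : ℕ}
    (f : (Fin m → A) → A) (F : (Fin m → A ⊗[ℂ] B) → A ⊗[ℂ] B) : Prop :=
  ∀ (a : Fin m → A) (b : Fin m → B),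
    F (fun i => a i ⊗ₜ[ℂ] b i) = f a ⊗ₜ[ℂ] (List.ofFn b).prod

/-- `F` agrees on pure tensors with `κ_B(f)`, i.e.
`F(a₁ ⊗ b₁, …, a_m ⊗ b_m) = (a₁ a₂ ⋯ a_m) ⊗ f(b₁, …, b_m)`. -/
def IsKappaB {A B : Type*} [Ring A] [Algebra ℂ A] [Ring B] [Algebra ℂ B] {m : ℕ}
    (f : (Fin m → B) → B) (F : (Fin m → A ⊗[ℂ] B) → A ⊗[ℂ] B) : Prop :=
  ∀ (a : Fin m → A) (b : Fin m → B),
    F (fun i => a i ⊗ₜ[ℂ] b i) = (List.ofFn a).prod ⊗ₜ[ℂ] f b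

/-- The tuple fed to `f` in `insertCochain f g i v`, abstracted. -/
def partTuple {M N : Type*} {k l : ℕ} (v : Fin (k + l) → M)
    (g : (Fin l → M) → N) (h : M → N) (i : Fin (k + 1)) : Fin (k + 1) → N := fun j =>
  if hji : (j : ℕ) < (i : ℕ) then
    h (v ⟨(j : ℕ), by have := j.isLt; have := i.isLt; omega⟩)
  else if hje : (j : ℕ) = (i : ℕ) then
    g fun s => v ⟨(i : ℕ) + (s : ℕ), by have := i.isLt; have := s.isLt; omega⟩
  else
    h (v ⟨(j : ℕ) + l - 1, by have := j.isLt; omega⟩)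

lemma insertCochain_eq {M : Type*} {k l : ℕ}
    (f : (Fin (k + 1) → M) → M) (g : (Fin l → M) → M) (i : Fin (k + 1))
    (v : Fin (k + l) → M) :
    insertCochain f g i v = f (partTuple v g id i) := rfl

lemma ofFn_split {α : Type*} {m p n : ℕ} (h : n = m + p) (c : Fin n → α) :
    List.ofFn c = (List.ofFn fun t : Fin m => c ⟨t, by omega⟩)
      ++ (List.ofFn fun t : Fin p => c ⟨m + t, by omega⟩) := by
  subst h
  rw [List.ofFn_add]
  rfl

lemma ofFn_cast {α : Type*} {n m : ℕ} (h : n = m) (c : Fin m → α) :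
    (List.ofFn fun j : Fin n => c (Fin.cast h j)) = List.ofFn c := by
  subst h; rfl

/-- key combinatorial fact: the ordered product of the partTuple (with `g` the
ordered product) equals the full ordered product. -/
lemma insert_prod {M : Type*} [Monoid M] {k l : ℕ} (i : Fin (k + 1))
    (b : Fin (k + l) → M) (hl : 0 < l) :
    (List.ofFn (partTuple b (fun t => (List.ofFn t).prod) id i)).prod
      = (List.ofFn b).prod := by
  have hik : (i : ℕ) ≤ k := by have := i.isLt; omega
  rw [ofFn_split (show k + 1 = (i : ℕ) + (1 + (k - i)) by omega),
      ofFn_split (show 1 + (k - (i:ℕ)) = 1 + (k - i) from rfl)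
        (fun t : Fin (1 + (k - (i:ℕ))) => partTuple b (fun t => (List.ofFn t).prod) id i ⟨(i:ℕ) + t, by have := t.isLt; omega⟩),
      ofFn_split (show k + l = (i : ℕ) + (l + (k - i)) by omega) b,
      ofFn_split (show l + (k - (i:ℕ)) = l + (k - i) from rfl)
        (fun t : Fin (l + (k - (i:ℕ))) => b ⟨(i:ℕ) + t, by have := t.isLt; omega⟩)]
  simp only [List.prod_append]
  congr 1
  · refine congrArg List.prod (congrArg _ (funext fun t => ?_))
    have ht : ((⟨(t:ℕ), by have := t.isLt; omega⟩ : Fin (k+1)) : ℕ) < (i : ℕ) := t.isLt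
    rw [partTuple, dif_pos ht]
    rfl
  congr 1
  · -- middle block: singleton [prod]
    have h0 : ∀ t : Fin 1, partTuple b (fun t => (List.ofFn t).prod) id i
        ⟨(i:ℕ) + ((⟨(t:ℕ), by have := t.isLt; omega⟩ : Fin (1 + (k - (i:ℕ)))) : ℕ), by have := t.isLt; omega⟩
        = (List.ofFn fun s : Fin l => b ⟨(i:ℕ) + ((⟨(s:ℕ), by have := s.isLt; omega⟩ : Fin (l + (k - (i:ℕ)))) : ℕ), by have := s.isLt; omega⟩).prod := by
      intro t
      have ht0 : (t : ℕ) = 0 := by omega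
      rw [partTuple]
      rw [dif_neg (by simp [ht0]), dif_pos (by simp [ht0])]
    rw [List.ofFn_succ]
    simp only [List.ofFn_zero, List.prod_cons, List.prod_nil, mul_one]
    rw [h0 0]
  · refine congrArg List.prod (congrArg _ (funext fun t => ?_))
    have hc : ¬ ((i:ℕ) + (1 + (t:ℕ)) < (i:ℕ)) := by omega
    have hc2 : ¬ ((i:ℕ) + (1 + (t:ℕ)) = (i:ℕ)) := by omega
    rw [partTuple]
    rw [dif_neg (by exact hc), dif_neg (by exact hc2)]
    show b _ = b _
    congr 1
    apply Fin.ext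
    show (i:ℕ) + (1 + (t:ℕ)) + l - 1 = (i:ℕ) + (l + (t:ℕ))
    omega

section Kappa
variable {A B : Type*} [Ring A] [Algebra ℂ A] [Ring B] [Algebra ℂ B] {k l : ℕ}

lemma kappaA_insert
    (f : (Fin (k + 1) → A) → A) (g : (Fin (l + 1) → A) → A)
    (F G : (Fin _ → A ⊗[ℂ] B) → A ⊗[ℂ] B)
    (hF : IsKappaA f F) (hG : IsKappaA g G) (i : Fin (k + 1)) :
    IsKappaA (insertCochain f g i) (insertCochain F G i) := by
  intro a b
  rw [insertCochain_eq F G i, insertCochain_eq f g i]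
  have key : partTuple (fun t => a t ⊗ₜ[ℂ] b t) G id i
      = fun j => (partTuple a g id i j) ⊗ₜ[ℂ]
          (partTuple b (fun t => (List.ofFn t).prod) id i j) := by
    funext j
    by_cases h1 : (j : ℕ) < (i : ℕ)
    · rw [partTuple, partTuple, partTuple, dif_pos h1, dif_pos h1, dif_pos h1]; rfl
    · by_cases h2 : (j : ℕ) = (i : ℕ)
      · rw [partTuple, partTuple, partTuple, dif_neg h1, dif_neg h1, dif_neg h1,
          dif_pos h2, dif_pos h2, dif_pos h2]
        exact hG _ _
      · rw [partTuple, partTuple, partTuple, dif_neg h1, dif_neg h1, dif_neg h1,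
          dif_neg h2, dif_neg h2, dif_neg h2]; rfl
  rw [key, hF, insert_prod i _ (Nat.succ_pos l)]

lemma kappaA_circle
    (f : (Fin (k + 1) → A) → A) (g : (Fin (l + 1) → A) → A)
    (F G : (Fin _ → A ⊗[ℂ] B) → A ⊗[ℂ] B)
    (hF : IsKappaA f F) (hG : IsKappaA g G) :
    IsKappaA (circleCochain f g) (circleCochain F G) := by
  intro a b
  show (∑ i : Fin (k+1), _) = (∑ i : Fin (k+1), _) ⊗ₜ[ℂ] _
  rw [TensorProduct.sum_tmul]
  refine Finset.sum_congr rfl fun i _ => ?_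
  rw [kappaA_insert f g F G hF hG i a b, TensorProduct.smul_tmul']

lemma kappaA_bracket
    (f : (Fin (k + 1) → A) → A) (g : (Fin (l + 1) → A) → A)
    (F G : (Fin _ → A ⊗[ℂ] B) → A ⊗[ℂ] B)
    (hF : IsKappaA f F) (hG : IsKappaA g G) :
    IsKappaA (bracketCochain f g) (bracketCochain F G) := by
  intro a b
  have hcast : l + (k + 1) = k + l + 1 := by omega
  show _ - _ = (_ - _) ⊗ₜ[ℂ] _
  rw [TensorProduct.sub_tmul, ← TensorProduct.smul_tmul']
  have h2 : circleCochain G F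
        (fun j => (fun t => a t ⊗ₜ[ℂ] b t) (Fin.cast hcast j))
      = circleCochain g f (fun j => a (Fin.cast hcast j))
          ⊗ₜ[ℂ] (List.ofFn b).prod := by
    rw [kappaA_circle g f G F hG hF (fun j => a (Fin.cast hcast j))
      (fun j => b (Fin.cast hcast j)), ofFn_cast hcast b]
  congr 1
  · exact kappaA_circle f g F G hF hG a b
  · exact congrArg (((-1 : ℂ) ^ (k * l)) • ·) h2

lemma kappaB_insert
    (f : (Fin (k + 1) → B) → B) (g : (Fin (l + 1) → B) → B)
    (F G : (Fin _ → A ⊗[ℂ] B) → A ⊗[ℂ] B)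
    (hF : IsKappaB f F) (hG : IsKappaB g G) (i : Fin (k + 1)) :
    IsKappaB (insertCochain f g i) (insertCochain F G i) := by
  intro a b
  rw [insertCochain_eq F G i, insertCochain_eq f g i]
  have key : partTuple (fun t => a t ⊗ₜ[ℂ] b t) G id i
      = fun j => (partTuple a (fun t => (List.ofFn t).prod) id i j) ⊗ₜ[ℂ]
          (partTuple b g id i j) := by
    funext j
    by_cases h1 : (j : ℕ) < (i : ℕ)
    · rw [partTuple, partTuple, partTuple, dif_pos h1, dif_pos h1, dif_pos h1]; rfl
    · by_cases h2 : (j : ℕ) = (i : ℕ)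
      · rw [partTuple, partTuple, partTuple, dif_neg h1, dif_neg h1, dif_neg h1,
          dif_pos h2, dif_pos h2, dif_pos h2]
        exact hG _ _
      · rw [partTuple, partTuple, partTuple, dif_neg h1, dif_neg h1, dif_neg h1,
          dif_neg h2, dif_neg h2, dif_neg h2]; rfl
  rw [key, hF, insert_prod i _ (Nat.succ_pos l)]

lemma kappaB_circle
    (f : (Fin (k + 1) → B) → B) (g : (Fin (l + 1) → B) → B)
    (F G : (Fin _ → A ⊗[ℂ] B) → A ⊗[ℂ] B)
    (hF : IsKappaB f F) (hG : IsKappaB g G) :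
    IsKappaB (circleCochain f g) (circleCochain F G) := by
  intro a b
  show (∑ i : Fin (k+1), _) = _ ⊗ₜ[ℂ] (∑ i : Fin (k+1), _)
  rw [TensorProduct.tmul_sum]
  refine Finset.sum_congr rfl fun i _ => ?_
  rw [kappaB_insert f g F G hF hG i a b, TensorProduct.tmul_smul]

lemma kappaB_bracket
    (f : (Fin (k + 1) → B) → B) (g : (Fin (l + 1) → B) → B)
    (F G : (Fin _ → A ⊗[ℂ] B) → A ⊗[ℂ] B)
    (hF : IsKappaB f F) (hG : IsKappaB g G) :
    IsKappaB (bracketCochain f g) (bracketCochain F G) := by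
  intro a b
  have hcast : l + (k + 1) = k + l + 1 := by omega
  show _ - _ = _ ⊗ₜ[ℂ] (_ - _)
  rw [TensorProduct.tmul_sub, TensorProduct.tmul_smul]
  have h2 : circleCochain G F
        (fun j => (fun t => a t ⊗ₜ[ℂ] b t) (Fin.cast hcast j))
      = (List.ofFn a).prod
          ⊗ₜ[ℂ] circleCochain g f (fun j => b (Fin.cast hcast j)) := by
    rw [kappaB_circle g f G F hG hF (fun j => a (Fin.cast hcast j))
      (fun j => b (Fin.cast hcast j)), ofFn_cast hcast a]
  congr 1
  · exact kappaB_circle f g F G hF hG a b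
  · exact congrArg (((-1 : ℂ) ^ (k * l)) • ·) h2

end Kappa

/-- For unital associative `ℂ`-algebras `A, B`, the map
`κ_A : C^•(A) → C^•(A ⊗ B)`, `κ_A(f)(a₁⊗b₁,…,a_m⊗b_m) = f(a₁,…,a_m) ⊗ b₁⋯b_m`,
is compatible with insertions, `κ_A(f) ∘_i κ_A(g) = κ_A(f ∘_i g)`, hence
`κ_A(f ∘ g) = κ_A(f) ∘ κ_A(g)` and `κ_A` is a morphism of graded Lie algebras for the
Gerstenhaber bracket: `κ_A([f, g]) = [κ_A(f), κ_A(g)]`.  The analogous statement holds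
for `κ_B`.  (Cochains on `A ⊗ B` are multilinear maps; the equalities are stated on pure
tensors, which determine a multilinear map.) -/
theorem kappa_is_gerstenhaber_morphism
    (A B : Type*) [Ring A] [Algebra ℂ A] [Ring B] [Algebra ℂ B] (k l : ℕ)
    (f : MultilinearMap ℂ (fun _ : Fin (k + 1) => A) A)
    (g : MultilinearMap ℂ (fun _ : Fin (l + 1) => A) A)
    (F : MultilinearMap ℂ (fun _ : Fin (k + 1) => A ⊗[ℂ] B) (A ⊗[ℂ] B))
    (G : MultilinearMap ℂ (fun _ : Fin (l + 1) => A ⊗[ℂ] B) (A ⊗[ℂ] B))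
    (hF : IsKappaA ⇑f ⇑F) (hG : IsKappaA ⇑g ⇑G)
    (f' : MultilinearMap ℂ (fun _ : Fin (k + 1) => B) B)
    (g' : MultilinearMap ℂ (fun _ : Fin (l + 1) => B) B)
    (F' : MultilinearMap ℂ (fun _ : Fin (k + 1) => A ⊗[ℂ] B) (A ⊗[ℂ] B))
    (G' : MultilinearMap ℂ (fun _ : Fin (l + 1) => A ⊗[ℂ] B) (A ⊗[ℂ] B))
    (hF' : IsKappaB ⇑f' ⇑F') (hG' : IsKappaB ⇑g' ⇑G') :
    ((∀ i : Fin (k + 1), IsKappaA (insertCochain ⇑f ⇑g i) (insertCochain ⇑F ⇑G i)) ∧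
        IsKappaA (circleCochain ⇑f ⇑g) (circleCochain ⇑F ⇑G) ∧
        IsKappaA (bracketCochain ⇑f ⇑g) (bracketCochain ⇑F ⇑G)) ∧
      ((∀ i : Fin (k + 1), IsKappaB (insertCochain ⇑f' ⇑g' i) (insertCochain ⇑F' ⇑G' i)) ∧
        IsKappaB (circleCochain ⇑f' ⇑g') (circleCochain ⇑F' ⇑G') ∧
        IsKappaB (bracketCochain ⇑f' ⇑g') (bracketCochain ⇑F' ⇑G')) :=
  ⟨⟨fun i => kappaA_insert ⇑f ⇑g ⇑F ⇑G hF hG i,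
    kappaA_circle ⇑f ⇑g ⇑F ⇑G hF hG,
    kappaA_bracket ⇑f ⇑g ⇑F ⇑G hF hG⟩,
   ⟨fun i => kappaB_insert ⇑f' ⇑g' ⇑F' ⇑G' hF' hG' i,
    kappaB_circle ⇑f' ⇑g' ⇑F' ⇑G' hF' hG',
    kappaB_bracket ⇑f' ⇑g' ⇑F' ⇑G' hF' hG'⟩⟩
end

section
/- Let V be a finite-dimensional complex symplectic vector space and G ⊂ Sp(V) a finite subgroup. For any g, h ∈ G with V = V^g + V^h, one has rk(id_V − g·h) = rk(id_V − g) + rk(id_V − h). -/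
/-!
If `g h v = v`, then `w := v - h v` lies in the range of `1 - h` and also, being
`-(1 - g) (h v)`, in the range of `1 - g`. For an isometry `k` of `ω`, the range of `1 - k`
is left-orthogonal to the fixed space of `k`, so `w` is left-orthogonal to `V^g + V^h = V`,
hence `w = 0`. Thus `V^{gh} = V^g ∩ V^h`, and rank–nullity together with the dimension
formula for `V^g + V^h = V` gives the rank identity.
-/

open LinearMap Module

namespace LinearMap.BilinForm

variable {R M : Type*} [CommRing R] [AddCommGroup M] [Module R M] (ω : LinearMap.BilinForm R M)

theorem apply_id_sub_apply_eq_zero_of_mem_ker {k : End R M}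
    (hk : ∀ u v, ω (k u) (k v) = ω u v) (u : M) {v : M} (hv : v ∈ ker (1 - k)) :
    ω ((1 - k) u) v = 0 := by
  have hkv : k v = v := (sub_eq_zero.mp (mem_ker.mp hv)).symm
  rw [LinearMap.sub_apply, End.one_apply, map_sub, LinearMap.sub_apply, ← hk u v, hkv, sub_self]

theorem ker_id_sub_mul_eq_inf (hω : ω.SeparatingLeft) {g h : End R M}
    (hg : ∀ u v, ω (g u) (g v) = ω u v) (hh : ∀ u v, ω (h u) (h v) = ω u v)
    (hsum : ker (1 - g) ⊔ ker (1 - h) = ⊤) :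
    ker (1 - g * h) = ker (1 - g) ⊓ ker (1 - h) := by
  refine le_antisymm (fun v hv => ?_) (fun v hv => ?_)
  · have hghv : g (h v) = v := (sub_eq_zero.mp (mem_ker.mp hv)).symm
    have hw : (1 - h) v = -(1 - g) (h v) := by
      simp only [LinearMap.sub_apply, End.one_apply, hghv, neg_sub]
    have hw_zero : (1 - h) v = 0 := by
      refine hω _ fun u => ?_
      obtain ⟨a, ha, b, hb, rfl⟩ := Submodule.mem_sup.mp (hsum.symm ▸ Submodule.mem_top : u ∈ _)
      rw [map_add, apply_id_sub_apply_eq_zero_of_mem_ker ω hh v hb, hw, map_neg,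
        LinearMap.neg_apply, apply_id_sub_apply_eq_zero_of_mem_ker ω hg _ ha, neg_zero, add_zero]
    have hhv : h v = v := (sub_eq_zero.mp hw_zero).symm
    refine Submodule.mem_inf.mpr ⟨?_, mem_ker.mpr hw_zero⟩
    rw [mem_ker, LinearMap.sub_apply, End.one_apply, sub_eq_zero, ← hhv, hghv, hhv]
  · obtain ⟨hgv, hhv⟩ := Submodule.mem_inf.mp hv
    rw [mem_ker, LinearMap.sub_apply, End.one_apply, sub_eq_zero] at hgv hhv
    rw [mem_ker, LinearMap.sub_apply, End.one_apply, End.mul_apply, ← hhv, ← hgv, sub_self]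

end LinearMap.BilinForm

theorem LinearMap.finrank_range_eq_add_of_ker_eq_inf {K V W₁ W₂ W₃ : Type*} [DivisionRing K]
    [AddCommGroup V] [Module K V] [FiniteDimensional K V] [AddCommGroup W₁] [Module K W₁]
    [AddCommGroup W₂] [Module K W₂] [AddCommGroup W₃] [Module K W₃]
    {f₁ : V →ₗ[K] W₁} {f₂ : V →ₗ[K] W₂} {f : V →ₗ[K] W₃}
    (hker : ker f = ker f₁ ⊓ ker f₂) (hsup : ker f₁ ⊔ ker f₂ = ⊤) :
    finrank K (range f) = finrank K (range f₁) + finrank K (range f₂) := by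
  have h₁ := finrank_range_add_finrank_ker f₁
  have h₂ := finrank_range_add_finrank_ker f₂
  have h := finrank_range_add_finrank_ker f
  have hdim := Submodule.finrank_sup_add_finrank_inf_eq (ker f₁) (ker f₂)
  rw [hsup, finrank_top] at hdim
  rw [hker] at h
  omega

theorem rank_id_sub_mul_eq_add_general
    (V : Type*) [AddCommGroup V] [Module ℂ V] [FiniteDimensional ℂ V]
    (ω : LinearMap.BilinForm ℂ V) (hNondeg : ω.Nondegenerate)
    (G : Subgroup (V ≃ₗ[ℂ] V))
    (hGsymp : ∀ g ∈ G, ∀ u v : V, ω (g u) (g v) = ω u v)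
    (g h : V ≃ₗ[ℂ] V) (hg : g ∈ G) (hh : h ∈ G)
    (hsum : LinearMap.ker ((1 : V →ₗ[ℂ] V) - g.toLinearMap) ⊔
        LinearMap.ker ((1 : V →ₗ[ℂ] V) - h.toLinearMap) = ⊤) :
    Module.finrank ℂ (LinearMap.range ((1 : V →ₗ[ℂ] V) - (g * h).toLinearMap)) =
      Module.finrank ℂ (LinearMap.range ((1 : V →ₗ[ℂ] V) - g.toLinearMap)) +
        Module.finrank ℂ (LinearMap.range ((1 : V →ₗ[ℂ] V) - h.toLinearMap)) := by
  have hker := BilinForm.ker_id_sub_mul_eq_inf ω hNondeg.1 (hGsymp g hg) (hGsymp h hh) hsum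
  rw [← LinearEquiv.coe_toLinearMap_mul] at hker
  exact finrank_range_eq_add_of_ker_eq_inf hker hsum

/-- Let `V` be a finite-dimensional complex symplectic vector space and
`G ⊂ Sp(V)` a finite subgroup.  For any `g, h ∈ G` with `V = V^g + V^h`, one has
`rk(id − g·h) = rk(id − g) + rk(id − h)`. -/
theorem rank_id_sub_mul_eq_add
    (V : Type*) [AddCommGroup V] [Module ℂ V] [FiniteDimensional ℂ V]
    (ω : LinearMap.BilinForm ℂ V) (hAlt : ω.IsAlt) (hNondeg : ω.Nondegenerate)
    (G : Subgroup (V ≃ₗ[ℂ] V)) (hGfin : Finite G)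
    (hGsymp : ∀ g ∈ G, ∀ u v : V, ω (g u) (g v) = ω u v)
    (g h : V ≃ₗ[ℂ] V) (hg : g ∈ G) (hh : h ∈ G)
    (hsum : LinearMap.ker ((1 : V →ₗ[ℂ] V) - g.toLinearMap) ⊔
        LinearMap.ker ((1 : V →ₗ[ℂ] V) - h.toLinearMap) = ⊤) :
    Module.finrank ℂ (LinearMap.range ((1 : V →ₗ[ℂ] V) - (g * h).toLinearMap)) =
      Module.finrank ℂ (LinearMap.range ((1 : V →ₗ[ℂ] V) - g.toLinearMap)) +
        Module.finrank ℂ (LinearMap.range ((1 : V →ₗ[ℂ] V) - h.toLinearMap)) :=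
  rank_id_sub_mul_eq_add_general V ω hNondeg G hGsymp g h hg hh hsum
end
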